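/- Let q ≡ 1 (mod 4) be a prime power and a ∈ F_q with (a-1)(a+1) a nonzero square, so that (a, -a) is a valid pair. Let φ = φ[a, -a] and α(j) = φ(φ^{-1}(j) - 1) + 1. If j ∈ F_q satisfies: aj and a(j - a - 1) are nonzero squares, and a^{-1}j - 1 and a(j-1) are non-squares, then α(α(j)) = j. -/

import Mathlib

open Classical in
/-- The quadratic orthomorphism map: `0 ↦ 0`, `x ↦ a*x` if `x` is a (nonzero)
square, `x ↦ b*x` otherwise. -/
noncomputable def phi {F : Type*} [Field F] (a b : F) (x : F) : F :=
  if x = 0 then 0 else if IsSquare x then a * x else b * x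

/-- The row permutation `r_{0,1}` of the quadratic Latin square `L[a,b]`:
`α(j) = φ(φ⁻¹(j) - 1) + 1`. -/
noncomputable def alphaP {F : Type*} [Field F] (a b : F) (j : F) : F :=
  phi a b (Function.invFun (phi a b) j - 1) + 1

lemma sq_mul_iff {F : Type*} [Field F] [Fintype F] [DecidableEq F] {x y : F}
    (hx : x ≠ 0) (hy : y ≠ 0) : IsSquare (x * y) ↔ (IsSquare x ↔ IsSquare y) := by
  rw [← quadraticChar_one_iff_isSquare (mul_ne_zero hx hy),
    ← quadraticChar_one_iff_isSquare hx, ← quadraticChar_one_iff_isSquare hy, map_mul]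
  rcases quadraticChar_dichotomy hx with h | h <;>
    rcases quadraticChar_dichotomy hy with h' | h' <;> rw [h, h'] <;> norm_num

lemma sq_neg_iff {F : Type*} [Field F] (hm1 : IsSquare (-1 : F)) {x : F} :
    IsSquare (-x) ↔ IsSquare x := by
  constructor
  · intro h; simpa using hm1.mul h
  · intro h; simpa using hm1.mul h

lemma phi_inj {F : Type*} [Field F] [Fintype F] {a : F}
    (hm1 : IsSquare (-1 : F)) (ha : a ≠ 0) : Function.Injective (phi a (-a)) := by
  intro x y h
  unfold phi at h
  by_cases hx : x = 0 <;> by_cases hy : y = 0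
  · rw [hx, hy]
  · rw [if_pos hx, if_neg hy] at h
    have hy0 : y = 0 := by
      split_ifs at h
      · simpa [mul_eq_zero, ha] using h.symm
      · simpa [mul_eq_zero, neg_eq_zero, ha] using h.symm
    exact (hy hy0).elim
  · rw [if_neg hx, if_pos hy] at h
    have hx0 : x = 0 := by
      split_ifs at h
      · simpa [mul_eq_zero, ha] using h
      · simpa [mul_eq_zero, neg_eq_zero, ha] using h
    exact (hx hx0).elim
  · rw [if_neg hx, if_neg hy] at h
    by_cases hsx : IsSquare x <;> by_cases hsy : IsSquare y <;>
      simp only [hsx, hsy, if_true, if_false, neg_mul] at h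
    · exact mul_left_cancel₀ ha h
    · exfalso
      have hxy : x = -y := mul_left_cancel₀ ha (h.trans (by ring))
      rw [hxy] at hsx
      exact hsy ((sq_neg_iff hm1).1 hsx)
    · exfalso
      have hxy : x = -y := mul_left_cancel₀ ha ((by ring : a * x = -(-(a*x))).trans (by rw [h]; ring))
      rw [hxy, sq_neg_iff hm1] at hsx
      exact hsx hsy
    · exact mul_left_cancel₀ ha (neg_injective h)

/-- Lemma on `L[a, -a]`: for `q ≡ 1 (mod 4)` and `(a-1)(a+1)` a nonzero square,
if `aj` and `a(j-a-1)` are nonzero squares and `a⁻¹j - 1`, `a(j-1)` are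
non-squares, then `α²(j) = j`. -/
theorem stmt9 {F : Type*} [Field F] [Fintype F]
    (h4 : Fintype.card F % 4 = 1)
    (a : F) (ha : (a - 1) * (a + 1) ≠ 0 ∧ IsSquare ((a - 1) * (a + 1)))
    (j : F)
    (h1 : a * j ≠ 0 ∧ IsSquare (a * j))
    (h2 : a * (j - a - 1) ≠ 0 ∧ IsSquare (a * (j - a - 1)))
    (h3 : a⁻¹ * j - 1 ≠ 0 ∧ ¬ IsSquare (a⁻¹ * j - 1))
    (h4' : a * (j - 1) ≠ 0 ∧ ¬ IsSquare (a * (j - 1))) :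
    alphaP a (-a) (alphaP a (-a) j) = j := by

  classical
  have ha0 : a ≠ 0 := fun h => h1.1 (by simp [h])
  have hj0 : j ≠ 0 := fun h => h1.1 (by simp [h])
  have hm1 : IsSquare (-1 : F) := by
    rw [FiniteField.isSquare_neg_one_iff]; omega
  have hinj := phi_inj hm1 ha0
  have hainv : a⁻¹ ≠ 0 := inv_ne_zero ha0
  -- squareness of a⁻¹ matches a
  have hsa_iff : ∀ x : F, x ≠ 0 → (IsSquare (a * x) ↔ (IsSquare a ↔ IsSquare x)) :=
    fun x hx => sq_mul_iff ha0 hx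
  -- invFun computation
  have hinv_calc : ∀ k : F, k ≠ 0 → IsSquare (a * k) →
      Function.invFun (phi a (-a)) k = a⁻¹ * k := by
    intro k hk hsk
    have hsq : IsSquare (a⁻¹ * k) := by
      rcases (sq_mul_iff ha0 hk).1 hsk with hIff
      rw [sq_mul_iff hainv hk, isSquare_inv]
      exact hIff
    have hphi : phi a (-a) (a⁻¹ * k) = k := by
      unfold phi
      rw [if_neg (mul_ne_zero hainv hk), if_pos hsq]
      field_simp
    conv_lhs => rw [← hphi]
    exact Function.leftInverse_invFun hinj _
  -- first application
  have step1 : alphaP a (-a) j = a + 1 - j := by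
    unfold alphaP
    rw [hinv_calc j hj0 h1.2]
    unfold phi
    rw [if_neg h3.1, if_neg h3.2]
    field_simp
    ring
  rw [step1]
  have hj2 : a + 1 - j ≠ 0 := by
    intro h
    apply h2.1
    have : j - a - 1 = 0 := by linear_combination -h
    rw [this, mul_zero]
  have hsj2 : IsSquare (a * (a + 1 - j)) := by
    have : a * (a + 1 - j) = -1 * (a * (j - a - 1)) := by ring
    rw [this]
    exact hm1.mul h2.2
  have step2 : alphaP a (-a) (a + 1 - j) = j := by
    unfold alphaP
    rw [hinv_calc _ hj2 hsj2]
    have hx : a⁻¹ * (a + 1 - j) - 1 = -(a⁻¹ * (j - 1)) := by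
      field_simp; ring
    have hxns : ¬ IsSquare (a⁻¹ * (a + 1 - j) - 1) := by
      rw [hx, sq_neg_iff hm1]
      intro hsq
      apply h4'.2
      have : a * (j - 1) = a * a * (a⁻¹ * (j - 1)) := by field_simp
      rw [this]
      have : IsSquare (a * a) := ⟨a, rfl⟩
      exact this.mul hsq
    have hx0 : a⁻¹ * (a + 1 - j) - 1 ≠ 0 := by
      rw [hx, neg_ne_zero]
      intro h
      apply h4'.1
      have : j - 1 = 0 := by
        have := mul_eq_zero.1 h
        rcases this with h' | h'
        · exact absurd h' hainv
        · exact h'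
      rw [this, mul_zero]
    unfold phi
    rw [if_neg hx0, if_neg hxns, hx]
    field_simp
    ring
  exact step2
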